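/- Let 0 < q < p ≤ ∞, b < −1/q, and let (A_j), (B_j) be sequences of quasi-Banach spaces with B_j ↪ A_j uniformly in j. Then ℓ_q((A_j, B_j)_{(1,b),q}) is continuously embedded in (ℓ_p(A_j), ℓ_p(B_j))_{(1,b),q}. -/
import Mathlib

open MeasureTheory
open scoped ENNReal

/-- The Peetre K-functional for a couple modelled as an ambient group `A` with two
quasi-norms and the second space given by the additive subgroup `S`. -/
noncomputable def Kfunctional {A : Type*} [AddCommGroup A]
    (N0 N1 : A → ℝ≥0∞) (S : AddSubgroup A) (t : ℝ) (a : A) : ℝ≥0∞ :=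
  ⨅ a1 : S, (N0 (a - (a1 : A)) + ENNReal.ofReal t * N1 (a1 : A))

/-- The `K_p`-functional
`K_p(t, a) = inf_{a₁ ∈ S} (N0(a − a₁)^p + t^p N1(a₁)^p)^{1/p}`. -/
noncomputable def KpFunctional (p : ℝ) {A : Type*} [AddCommGroup A]
    (N0 N1 : A → ℝ≥0∞) (S : AddSubgroup A) (t : ℝ) (a : A) : ℝ≥0∞ :=
  ⨅ a1 : S, ((N0 (a - (a1 : A))) ^ p + (ENNReal.ofReal t) ^ p * (N1 (a1 : A)) ^ p) ^ (1/p)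

/-- The quasi-norm of the limiting interpolation space `(A₀, A₁)_{(1,b),q}`:
`(∫₀¹ (t^{−1}(1 + |log t|)^b K(t,a))^q dt/t)^{1/q}`. -/
noncomputable def limInterpNorm {A : Type*} [AddCommGroup A]
    (N0 N1 : A → ℝ≥0∞) (S : AddSubgroup A) (b q : ℝ) (a : A) : ℝ≥0∞ :=
  (∫⁻ t in Set.Ioo (0:ℝ) 1,
    (ENNReal.ofReal (t⁻¹ * (1 - Real.log t) ^ b) * Kfunctional N0 N1 S t a) ^ q
      * ENNReal.ofReal (t⁻¹)) ^ (1/q)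

lemma tsum_rpow_le_rpow_tsum' {x : ℕ → ℝ≥0∞} {r : ℝ} (hr : 1 ≤ r) :
    ∑' j, x j ^ r ≤ (∑' j, x j) ^ r := by
  have h0 : (0:ℝ) ≤ r - 1 := by linarith
  calc ∑' j, x j ^ r ≤ ∑' j, x j * (∑' i, x i) ^ (r-1) := by
        refine ENNReal.tsum_le_tsum fun j => ?_
        have h1 : x j ^ r = x j ^ (1 + (r-1)) := by ring_nf
        rw [h1, ENNReal.rpow_add_of_nonneg _ _ zero_le_one h0, ENNReal.rpow_one]
        exact mul_le_mul' le_rfl (ENNReal.rpow_le_rpow (ENNReal.le_tsum j) h0)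
    _ = (∑' j, x j) * (∑' i, x i) ^ (r-1) := ENNReal.tsum_mul_right
    _ = (∑' j, x j) ^ (1:ℝ) * (∑' i, x i) ^ (r-1) := by rw [ENNReal.rpow_one]
    _ = (∑' j, x j) ^ r := by
        rw [← ENNReal.rpow_add_of_nonneg _ _ zero_le_one h0]
        ring_nf

lemma lq_le_lp {x : ℕ → ℝ≥0∞} {p q : ℝ} (hq : 0 < q) (hqp : q ≤ p) :
    (∑' j, x j ^ p) ^ (1/p) ≤ (∑' j, x j ^ q) ^ (1/q) := by
  have hp : 0 < p := hq.trans_le hqp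
  have hr : 1 ≤ p / q := (one_le_div hq).2 hqp
  have key : ∑' j, x j ^ p ≤ (∑' j, x j ^ q) ^ (p / q) := by
    have h1 : ∀ j, x j ^ p = (x j ^ q) ^ (p / q) := fun j => by
      rw [← ENNReal.rpow_mul]
      congr 1
      field_simp
    simp_rw [h1]
    exact tsum_rpow_le_rpow_tsum' hr
  calc (∑' j, x j ^ p) ^ (1/p) ≤ ((∑' j, x j ^ q) ^ (p/q)) ^ (1/p) :=
        ENNReal.rpow_le_rpow key (by positivity)
    _ = (∑' j, x j ^ q) ^ (1/q) := by
        rw [← ENNReal.rpow_mul]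
        congr 1
        field_simp

lemma Kfunctional_mono {A : Type*} [AddCommGroup A] (N0 N1 : A → ℝ≥0∞)
    (S : AddSubgroup A) (a : A) : Monotone (fun t => Kfunctional N0 N1 S t a) := by
  intro s t hst
  exact iInf_mono fun a1 =>
    add_le_add le_rfl (mul_le_mul' (ENNReal.ofReal_le_ofReal hst) le_rfl)

lemma Kp_le_K (p : ℝ) (hp : 0 < p) {A : Type*} [AddCommGroup A] (N0 N1 : A → ℝ≥0∞)
    (S : AddSubgroup A) (t : ℝ) (a : A) :
    KpFunctional p N0 N1 S t a ≤ (2:ℝ≥0∞) ^ (1/p) * Kfunctional N0 N1 S t a := by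
  rw [Kfunctional, ENNReal.mul_iInf_of_ne (ENNReal.rpow_pos (by norm_num) (by norm_num)).ne'
    (ENNReal.rpow_ne_top_of_nonneg (by positivity) (by norm_num))]
  refine le_iInf fun a1 => ?_
  refine le_trans (iInf_le _ a1) ?_
  set x := N0 (a - (a1 : A))
  set y := ENNReal.ofReal t * N1 (a1 : A)
  have h1 : x ^ p + (ENNReal.ofReal t) ^ p * (N1 (a1 : A)) ^ p ≤ 2 * (x + y) ^ p := by
    rw [← ENNReal.mul_rpow_of_nonneg _ _ hp.le, two_mul]
    exact add_le_add (ENNReal.rpow_le_rpow le_self_add hp.le)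
      (ENNReal.rpow_le_rpow le_add_self hp.le)
  calc (x ^ p + (ENNReal.ofReal t) ^ p * (N1 (a1 : A)) ^ p) ^ (1/p)
      ≤ (2 * (x + y) ^ p) ^ (1/p) := ENNReal.rpow_le_rpow h1 (by positivity)
    _ = (2:ℝ≥0∞) ^ (1/p) * (x + y) := by
        rw [ENNReal.mul_rpow_of_nonneg _ _ (by positivity), ← ENNReal.rpow_mul,
          mul_one_div, div_self hp.ne', ENNReal.rpow_one]

lemma limInterpNorm_pow {A : Type*} [AddCommGroup A] (N0 N1 : A → ℝ≥0∞)
    (S : AddSubgroup A) (b : ℝ) {q : ℝ} (hq : 0 < q) (a : A) :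
    limInterpNorm N0 N1 S b q a ^ q =
      ∫⁻ t in Set.Ioo (0:ℝ) 1,
        (ENNReal.ofReal (t⁻¹ * (1 - Real.log t) ^ b) * Kfunctional N0 N1 S t a) ^ q
          * ENNReal.ofReal (t⁻¹) := by
  rw [limInterpNorm, ← ENNReal.rpow_mul, one_div_mul_cancel hq.ne', ENNReal.rpow_one]

/-- for `0 < q < p ≤ ∞`, `b < −1/q` and sequences of quasi-Banach couples
`(A_j, B_j)` with `B_j ↪ A_j` uniformly in `j`, one has
`ℓ_q((A_j, B_j)_{(1,b),q}) ↪ (ℓ_p(A_j), ℓ_p(B_j))_{(1,b),q}`, i.e.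
`(∫₀¹ (t^{−1}(1−log t)^b (∑_j K_p(t, a_j)^p)^{1/p})^q dt/t)^{1/q}
  ≲ (∑_j ‖a_j‖_{(A_j,B_j)_{(1,b),q}}^q)^{1/q}`. -/
theorem ellq_embedding_into_limiting_interpolation
    (p q b : ℝ) (hq : 0 < q) (hqp : q < p) (hb : b < -(1/q))
    {A : ℕ → Type*} [∀ j, AddCommGroup (A j)]
    (N0 N1 : ∀ j, A j → ℝ≥0∞) (S : ∀ j, AddSubgroup (A j))
    (cEmb : ℝ≥0∞) (hcEmb : cEmb ≠ ⊤)
    (hEmb : ∀ j, ∀ x ∈ S j, N0 j x ≤ cEmb * N1 j x) :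
    ∃ C : ℝ≥0∞, C ≠ ⊤ ∧ ∀ a : ∀ j, A j,
      (∫⁻ t in Set.Ioo (0:ℝ) 1,
        (ENNReal.ofReal (t⁻¹ * (1 - Real.log t) ^ b) *
          (∑' j, (KpFunctional p (N0 j) (N1 j) (S j) t (a j)) ^ p) ^ (1/p)) ^ q
          * ENNReal.ofReal (t⁻¹)) ^ (1/q)
      ≤ C * (∑' j, (limInterpNorm (N0 j) (N1 j) (S j) b q (a j)) ^ q) ^ (1/q) := by
  have hp : 0 < p := hq.trans hqp
  set c : ℝ≥0∞ := (2:ℝ≥0∞) ^ (1/p) with hc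
  refine ⟨c, ENNReal.rpow_ne_top_of_nonneg (by positivity) (by norm_num), fun a => ?_⟩
  -- notation
  have hpt : ∀ t : ℝ,
      (ENNReal.ofReal (t⁻¹ * (1 - Real.log t) ^ b) *
          (∑' j, (KpFunctional p (N0 j) (N1 j) (S j) t (a j)) ^ p) ^ (1/p)) ^ q
          * ENNReal.ofReal t⁻¹
      ≤ c ^ q * ∑' j, ((ENNReal.ofReal (t⁻¹ * (1 - Real.log t) ^ b) *
          Kfunctional (N0 j) (N1 j) (S j) t (a j)) ^ q * ENNReal.ofReal t⁻¹) := by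
    intro t
    set w := ENNReal.ofReal (t⁻¹ * (1 - Real.log t) ^ b)
    set K : ℕ → ℝ≥0∞ := fun j => Kfunctional (N0 j) (N1 j) (S j) t (a j) with hK
    have h1 : (∑' j, (KpFunctional p (N0 j) (N1 j) (S j) t (a j)) ^ p) ^ (1/p)
        ≤ c * (∑' j, K j ^ q) ^ (1/q) := by
      calc (∑' j, (KpFunctional p (N0 j) (N1 j) (S j) t (a j)) ^ p) ^ (1/p)
          ≤ (∑' j, (KpFunctional p (N0 j) (N1 j) (S j) t (a j)) ^ q) ^ (1/q) :=
            lq_le_lp hq hqp.le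
        _ ≤ (∑' j, (c * K j) ^ q) ^ (1/q) :=
            ENNReal.rpow_le_rpow (ENNReal.tsum_le_tsum fun j =>
              ENNReal.rpow_le_rpow (Kp_le_K p hp _ _ _ t _) hq.le) (by positivity)
        _ = c * (∑' j, K j ^ q) ^ (1/q) := by
            simp_rw [ENNReal.mul_rpow_of_nonneg _ _ hq.le]
            rw [ENNReal.tsum_mul_left, ENNReal.mul_rpow_of_nonneg _ _ (by positivity),
              ← ENNReal.rpow_mul, mul_one_div, div_self hq.ne', ENNReal.rpow_one]
    calc (w * (∑' j, (KpFunctional p (N0 j) (N1 j) (S j) t (a j)) ^ p) ^ (1/p)) ^ q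
          * ENNReal.ofReal t⁻¹
        ≤ (w * (c * (∑' j, K j ^ q) ^ (1/q))) ^ q * ENNReal.ofReal t⁻¹ := by
          gcongr
      _ = c ^ q * ∑' j, ((w * K j) ^ q * ENNReal.ofReal t⁻¹) := by
          rw [ENNReal.mul_rpow_of_nonneg _ _ hq.le, ENNReal.mul_rpow_of_nonneg _ _ hq.le,
            ← ENNReal.rpow_mul (∑' j, K j ^ q) (1/q) q, one_div_mul_cancel hq.ne',
            ENNReal.rpow_one]
          simp_rw [ENNReal.mul_rpow_of_nonneg _ _ hq.le]
          rw [ENNReal.tsum_mul_right, ENNReal.tsum_mul_left]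
          ring
  have hmeas : ∀ j, Measurable (fun t : ℝ =>
      (ENNReal.ofReal (t⁻¹ * (1 - Real.log t) ^ b) *
        Kfunctional (N0 j) (N1 j) (S j) t (a j)) ^ q * ENNReal.ofReal t⁻¹) := by
    intro j
    have hK : Measurable (fun t : ℝ => Kfunctional (N0 j) (N1 j) (S j) t (a j)) :=
      (Kfunctional_mono (N0 j) (N1 j) (S j) (a j)).measurable
    have hw : Measurable (fun t : ℝ => ENNReal.ofReal (t⁻¹ * (1 - Real.log t) ^ b)) :=
      ENNReal.measurable_ofReal.comp
        (measurable_inv.mul ((measurable_const.sub Real.measurable_log).pow measurable_const))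
    exact ((hw.mul hK).pow measurable_const).mul (ENNReal.measurable_ofReal.comp measurable_inv)
  have hcq : c ^ q ≠ ⊤ :=
    ENNReal.rpow_ne_top_of_nonneg hq.le
      (ENNReal.rpow_ne_top_of_nonneg (by positivity) (by norm_num))
  calc (∫⁻ t in Set.Ioo (0:ℝ) 1,
        (ENNReal.ofReal (t⁻¹ * (1 - Real.log t) ^ b) *
          (∑' j, (KpFunctional p (N0 j) (N1 j) (S j) t (a j)) ^ p) ^ (1/p)) ^ q
          * ENNReal.ofReal t⁻¹) ^ (1/q)
      ≤ (∫⁻ t in Set.Ioo (0:ℝ) 1, c ^ q *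
          ∑' j, ((ENNReal.ofReal (t⁻¹ * (1 - Real.log t) ^ b) *
            Kfunctional (N0 j) (N1 j) (S j) t (a j)) ^ q * ENNReal.ofReal t⁻¹)) ^ (1/q) :=
        ENNReal.rpow_le_rpow (lintegral_mono fun t => hpt t) (by positivity)
    _ = (c ^ q * ∑' j, ∫⁻ t in Set.Ioo (0:ℝ) 1,
          ((ENNReal.ofReal (t⁻¹ * (1 - Real.log t) ^ b) *
            Kfunctional (N0 j) (N1 j) (S j) t (a j)) ^ q * ENNReal.ofReal t⁻¹)) ^ (1/q) := by
        rw [lintegral_const_mul' _ _ hcq, lintegral_tsum fun j => (hmeas j).aemeasurable]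
    _ = c * (∑' j, (limInterpNorm (N0 j) (N1 j) (S j) b q (a j)) ^ q) ^ (1/q) := by
        simp_rw [limInterpNorm_pow _ _ _ b hq]
        rw [ENNReal.mul_rpow_of_nonneg _ _ (by positivity), ← ENNReal.rpow_mul,
          mul_one_div, div_self hq.ne', ENNReal.rpow_one]
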